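/- arXiv:1101.1978 — 2 statements merged into one kernel-verified Lean document; each statement's English description precedes it below -/
import Mathlib

section
/- Let L be the generator of a reversible irreducible continuous-time Markov chain on a finite state space V with stationary distribution π, with eigenvalues 0 = λ₁ < λ₂ ≤ … of −L. For B ⊊ V nonempty, let λ^B_1 ≤ λ^B_2 ≤ … be the eigenvalues of −L^B, the generator of the chain killed on hitting B (acting on L²(V∖B, π)). Then λ^B_2 − λ^B_1 ≥ λ₂ − 1/E_π[H_B], where H_B is the hitting time of B and E_π denotes expectation started from stationarity. -/
/-!
Both bounds are variational. Tested on the mean hitting time `h`, for which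
`⟨h, -L h⟩_π = E_π h`, Rayleigh's bound for the killed chain gives `λ^B_1 ‖h‖² ≤ E_π h`, while
`‖h‖² ≥ (E_π h)²` by Cauchy–Schwarz; hence `λ^B_1 ≤ 1 / E_π h`. For `λ₂ ≤ λ^B_2`, some nonzero
combination of the first two killed eigenvectors, extended by zero off `B`, is orthogonal to the
ground state of the full chain, so its Rayleigh quotient is at least `λ₂` and at most `λ^B_2`.
-/

open Finset
open scoped Matrix

namespace FiniteSpectral

variable {W : Type*} {n : ℕ}

def wInner (S : Finset W) (p f g : W → ℝ) : ℝ := ∑ x ∈ S, f x * g x * p x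

/-- For a generator `M`, the Dirichlet form of the chain killed on leaving `S`. -/
def dirichletForm (S : Finset W) (p : W → ℝ) (M : Matrix W W ℝ) (f : W → ℝ) : ℝ :=
  wInner S p f fun x => -∑ y ∈ S, M x y * f y

def IsOrthonormal (S : Finset W) (p : W → ℝ) (u : Fin n → W → ℝ) : Prop :=
  ∀ j k, wInner S p (u j) (u k) = if j = k then 1 else 0

structure IsEigensystem (S : Finset W) (p : W → ℝ) (M : Matrix W W ℝ) (lam : Fin n → ℝ)
    (u : Fin n → W → ℝ) : Prop where
  orthonormal : IsOrthonormal S p u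
  eigen : ∀ k, ∀ x ∈ S, -∑ y ∈ S, M x y * u k y = lam k * u k x

section Expansion

variable {S : Finset W} {p : W → ℝ} {u : Fin n → W → ℝ}

/-- An orthonormal family of `card S` vectors in `L²(S, p)` is a basis, so its columns are
orthonormal as well. -/
theorem IsOrthonormal.sum_mul_mul_eq_ite [DecidableEq W] (hu : IsOrthonormal S p u)
    (hp : ∀ x ∈ S, 0 < p x) (hcard : S.card = n) {x y : W} (hx : x ∈ S) (hy : y ∈ S) :
    ∑ k, u k x * u k y * p y = if x = y then 1 else 0 := by
  let A : Matrix (Fin n) S ℝ := Matrix.of fun k z => u k z * √(p z)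
  have hAAt : A * Aᵀ = 1 := by
    ext j k
    rw [Matrix.mul_apply, Matrix.one_apply, ← hu j k, wInner, ← Finset.sum_coe_sort S]
    refine Finset.sum_congr rfl fun z _ => ?_
    simp only [Matrix.transpose_apply, Matrix.of_apply, A]
    linear_combination u j z * u k z * Real.mul_self_sqrt (hp z z.2).le
  have hAtA : Aᵀ * A = 1 :=
    (Matrix.mul_eq_one_comm_of_equiv (S.equivFinOfCardEq hcard).symm).mp hAAt
  have hcol := congr_fun₂ hAtA ⟨x, hx⟩ ⟨y, hy⟩
  simp only [Matrix.mul_apply, Matrix.transpose_apply, Matrix.of_apply, Matrix.one_apply, A,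
    Subtype.mk.injEq] at hcol
  have hsx : 0 < √(p x) := Real.sqrt_pos.mpr (hp x hx)
  refine mul_left_cancel₀ hsx.ne' ?_
  calc √(p x) * ∑ k, u k x * u k y * p y
      = √(p y) * ∑ k, u k x * √(p x) * (u k y * √(p y)) := by
        rw [Finset.mul_sum, Finset.mul_sum]
        refine Finset.sum_congr rfl fun k _ => ?_
        linear_combination -√(p x) * u k x * u k y * Real.mul_self_sqrt (hp y hy).le
    _ = √(p x) * if x = y then 1 else 0 := by
        rw [hcol]
        split_ifs with hxy
        · rw [hxy]
        · simp

theorem IsOrthonormal.sum_wInner_mul_eq [DecidableEq W] (hu : IsOrthonormal S p u)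
    (hp : ∀ x ∈ S, 0 < p x) (hcard : S.card = n) (f : W → ℝ) {x : W} (hx : x ∈ S) :
    ∑ k, wInner S p f (u k) * u k x = f x := by
  calc ∑ k, wInner S p f (u k) * u k x
      = ∑ y ∈ S, f y * ∑ k, u k x * u k y * p y := by
        simp only [wInner, Finset.sum_mul, Finset.mul_sum]
        rw [Finset.sum_comm]
        exact Finset.sum_congr rfl fun y _ => Finset.sum_congr rfl fun k _ => by ring
    _ = ∑ y ∈ S, f y * if x = y then 1 else 0 :=
        Finset.sum_congr rfl fun y hy => by rw [hu.sum_mul_mul_eq_ite hp hcard hx hy]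
    _ = f x := by simp [hx]

theorem sum_mul_wInner_sq (φ : Fin n → ℝ) (f : W → ℝ) :
    ∑ k, φ k * wInner S p f (u k) ^ 2 =
      wInner S p f fun y => ∑ k, φ k * wInner S p f (u k) * u k y := by
  simp only [wInner, Finset.mul_sum, Finset.sum_mul]
  rw [Finset.sum_comm]
  refine Finset.sum_congr rfl fun k _ => ?_
  rw [sq, Finset.sum_mul_sum, Finset.mul_sum]
  refine Finset.sum_congr rfl fun x _ => ?_
  rw [Finset.mul_sum]
  exact Finset.sum_congr rfl fun i _ => by ring

theorem IsOrthonormal.sum_wInner_sq [DecidableEq W] (hu : IsOrthonormal S p u)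
    (hp : ∀ x ∈ S, 0 < p x) (hcard : S.card = n) (f : W → ℝ) :
    ∑ k, wInner S p f (u k) ^ 2 = wInner S p f f := by
  have h := sum_mul_wInner_sq (S := S) (p := p) (u := u) (fun _ => 1) f
  simp only [one_mul] at h
  rw [h, wInner, wInner]
  exact Finset.sum_congr rfl fun x hx => by rw [hu.sum_wInner_mul_eq hp hcard f hx]

variable {M : Matrix W W ℝ} {lam : Fin n → ℝ}

theorem IsEigensystem.sum_mul_wInner_sq_eq_dirichletForm [DecidableEq W]
    (hu : IsEigensystem S p M lam u) (hp : ∀ x ∈ S, 0 < p x) (hcard : S.card = n) (f : W → ℝ) :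
    ∑ k, lam k * wInner S p f (u k) ^ 2 = dirichletForm S p M f := by
  rw [sum_mul_wInner_sq, dirichletForm, wInner, wInner]
  refine Finset.sum_congr rfl fun x hx => ?_
  congr 2
  calc ∑ k, lam k * wInner S p f (u k) * u k x
      = ∑ k, wInner S p f (u k) * -∑ y ∈ S, M x y * u k y :=
        Finset.sum_congr rfl fun k _ => by rw [hu.eigen k x hx]; ring
    _ = -∑ y ∈ S, M x y * ∑ k, wInner S p f (u k) * u k y := by
        simp only [Finset.mul_sum, mul_neg, Finset.sum_neg_distrib]
        rw [Finset.sum_comm]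
        exact congrArg _ <| Finset.sum_congr rfl fun y _ => Finset.sum_congr rfl fun k _ => by ring
    _ = -∑ y ∈ S, M x y * f y :=
        congrArg _ <| Finset.sum_congr rfl fun y hy => by
          rw [hu.orthonormal.sum_wInner_mul_eq hp hcard f hy]

theorem IsEigensystem.mul_wInner_self_le_dirichletForm [DecidableEq W]
    (hu : IsEigensystem S p M lam u) (hp : ∀ x ∈ S, 0 < p x) (hcard : S.card = n)
    {f : W → ℝ} {c : ℝ}
    (hc : ∀ k, wInner S p f (u k) ≠ 0 → c ≤ lam k) :
    c * wInner S p f f ≤ dirichletForm S p M f := by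
  rw [← hu.orthonormal.sum_wInner_sq hp hcard, ← hu.sum_mul_wInner_sq_eq_dirichletForm hp hcard,
    Finset.mul_sum]
  refine Finset.sum_le_sum fun k _ => ?_
  by_cases hk : wInner S p f (u k) = 0
  · simp [hk]
  · exact mul_le_mul_of_nonneg_right (hc k hk) (sq_nonneg _)

theorem IsEigensystem.dirichletForm_nonneg [DecidableEq W] (hu : IsEigensystem S p M lam u)
    (hp : ∀ x ∈ S, 0 < p x) (hcard : S.card = n) (hlam : ∀ k, 0 ≤ lam k) (f : W → ℝ) :
    0 ≤ dirichletForm S p M f := by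
  simpa using hu.mul_wInner_self_le_dirichletForm (f := f) hp hcard fun k _ => hlam k

end Expansion

section Restriction

variable [Fintype W] {S : Finset W} {f : W → ℝ}

theorem sum_mul_eq_of_eq_zero (hf : ∀ x ∉ S, f x = 0) (g : W → ℝ) :
    ∑ y ∈ S, g y * f y = ∑ y, g y * f y :=
  Finset.sum_subset (Finset.subset_univ S) fun y _ hy => by rw [hf y hy, mul_zero]

theorem wInner_univ_of_eq_zero (hf : ∀ x ∉ S, f x = 0) (p g : W → ℝ) :
    wInner univ p f g = wInner S p f g :=
  (Finset.sum_subset (Finset.subset_univ S) fun y _ hy => by rw [hf y hy, zero_mul, zero_mul]).symm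

theorem dirichletForm_univ_of_eq_zero (hf : ∀ x ∉ S, f x = 0) (p : W → ℝ) (M : Matrix W W ℝ) :
    dirichletForm univ p M f = dirichletForm S p M f := by
  rw [dirichletForm, wInner_univ_of_eq_zero hf, dirichletForm]
  exact Finset.sum_congr rfl fun x _ => by dsimp only; rw [sum_mul_eq_of_eq_zero hf]

theorem dirichletForm_eq_sum_of_hitting {p : W → ℝ} {M : Matrix W W ℝ} {h : W → ℝ}
    (hh0 : ∀ x ∉ S, h x = 0) (hh : ∀ x ∈ S, -∑ y ∈ S, M x y * h y = 1) :
    dirichletForm S p M h = ∑ x, p x * h x := by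
  rw [dirichletForm, wInner, ← sum_mul_eq_of_eq_zero hh0]
  exact Finset.sum_congr rfl fun x hx => by rw [hh x hx]; ring

end Restriction

section TwoModes

variable {S : Finset W} {p : W → ℝ} {M : Matrix W W ℝ} {lam : Fin n → ℝ} {u : Fin n → W → ℝ}
  {i j : Fin n}

theorem IsOrthonormal.wInner_add_add (hu : IsOrthonormal S p u) (hij : i ≠ j) (a b a' b' : ℝ) :
    wInner S p (fun x => a * u i x + b * u j x) (fun x => a' * u i x + b' * u j x) =
      a * a' + b * b' := by
  have hii := hu i i
  have hij' := hu i j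
  have hji := hu j i
  have hjj := hu j j
  simp only [if_pos, if_neg hij, if_neg hij.symm] at hii hij' hji hjj
  calc wInner S p (fun x => a * u i x + b * u j x) (fun x => a' * u i x + b' * u j x)
      = a * a' * wInner S p (u i) (u i) + a * b' * wInner S p (u i) (u j)
        + b * a' * wInner S p (u j) (u i) + b * b' * wInner S p (u j) (u j) := by
        simp only [wInner, Finset.mul_sum, ← Finset.sum_add_distrib]
        exact Finset.sum_congr rfl fun x _ => by ring
    _ = a * a' + b * b' := by rw [hii, hij', hji, hjj]; ring

theorem IsEigensystem.dirichletForm_add (hu : IsEigensystem S p M lam u) (hij : i ≠ j) (a b : ℝ) :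
    dirichletForm S p M (fun x => a * u i x + b * u j x) = lam i * a ^ 2 + lam j * b ^ 2 := by
  have hM : ∀ x ∈ S, -∑ y ∈ S, M x y * (a * u i y + b * u j y) =
      a * lam i * u i x + b * lam j * u j x := fun x hx => by
    calc -∑ y ∈ S, M x y * (a * u i y + b * u j y)
        = a * -∑ y ∈ S, M x y * u i y + b * -∑ y ∈ S, M x y * u j y := by
          rw [mul_neg, mul_neg, Finset.mul_sum, Finset.mul_sum, ← neg_add,
            ← Finset.sum_add_distrib]
          exact congrArg _ (Finset.sum_congr rfl fun y _ => by ring)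
      _ = a * lam i * u i x + b * lam j * u j x := by
          rw [hu.eigen i x hx, hu.eigen j x hx]; ring
  rw [dirichletForm, wInner, Finset.sum_congr rfl fun x hx => by rw [hM x hx]]
  rw [← wInner, hu.orthonormal.wInner_add_add hij]
  ring

end TwoModes

theorem exists_sq_add_sq_pos_and_mul_add_mul_eq_zero (s t : ℝ) :
    ∃ a b : ℝ, 0 < a ^ 2 + b ^ 2 ∧ a * s + b * t = 0 := by
  by_cases hs : s = 0
  · exact ⟨1, 0, by norm_num, by simp [hs]⟩
  · exact ⟨t, -s, by nlinarith [sq_nonneg t, mul_self_pos.mpr hs], by ring⟩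

section Killed

variable [Fintype W] [DecidableEq W] {p : W → ℝ} {M : Matrix W W ℝ}

/-- Courant–Fischer for the second eigenvalue: the span of two eigenvectors of the chain killed
off `S` contains a vector orthogonal to the eigenvector `v k₀` of the full chain. -/
theorem IsEigensystem.le_max_of_supported {m : ℕ} {lam : Fin m → ℝ} {v : Fin m → W → ℝ}
    (hv : IsEigensystem univ p M lam v) (hp : ∀ x, 0 < p x) (hcard : Fintype.card W = m)
    {k₀ : Fin m} {c : ℝ} (hc : ∀ k ≠ k₀, c ≤ lam k)
    {S : Finset W} {lamS : Fin n → ℝ} {u : Fin n → W → ℝ} (hu : IsEigensystem S p M lamS u)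
    (hu0 : ∀ k, ∀ x ∉ S, u k x = 0) {i j : Fin n} (hij : i ≠ j) :
    c ≤ max (lamS i) (lamS j) := by
  obtain ⟨a, b, hab, hperp⟩ := exists_sq_add_sq_pos_and_mul_add_mul_eq_zero
    (wInner univ p (u i) (v k₀)) (wInner univ p (u j) (v k₀))
  set f : W → ℝ := fun x => a * u i x + b * u j x
  have hf0 : ∀ x ∉ S, f x = 0 := fun x hx => by simp [f, hu0 i x hx, hu0 j x hx]
  have hfperp : wInner univ p f (v k₀) = 0 := by
    rw [← hperp]
    simp only [wInner, f, Finset.mul_sum, ← Finset.sum_add_distrib]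
    exact Finset.sum_congr rfl fun x _ => by ring
  have hrayleigh : c * wInner univ p f f ≤ dirichletForm univ p M f :=
    hv.mul_wInner_self_le_dirichletForm (fun x _ => hp x) (by rwa [card_univ])
      fun k hk => hc k fun hk₀ => hk (hk₀ ▸ hfperp)
  rw [wInner_univ_of_eq_zero hf0, dirichletForm_univ_of_eq_zero hf0,
    hu.orthonormal.wInner_add_add hij, hu.dirichletForm_add hij] at hrayleigh
  by_contra! hlt
  nlinarith [le_max_left (lamS i) (lamS j), le_max_right (lamS i) (lamS j)]

theorem IsEigensystem.le_one_div_sum_of_hitting {S : Finset W} {lam : Fin n → ℝ}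
    {u : Fin n → W → ℝ} (hu : IsEigensystem S p M lam u) (hp : ∀ x, 0 < p x)
    (hp1 : ∑ x, p x = 1) (hcard : S.card = n) {i : Fin n} (hmin : ∀ k, lam i ≤ lam k) {h : W → ℝ}
    (hh0 : ∀ x ∉ S, h x = 0) (hh : ∀ x ∈ S, -∑ y ∈ S, M x y * h y = 1)
    (hE : 0 ≤ ∑ x, p x * h x) :
    lam i ≤ 1 / ∑ x, p x * h x := by
  have hrayleigh : lam i * wInner S p h h ≤ ∑ x, p x * h x := by
    rw [← dirichletForm_eq_sum_of_hitting hh0 hh]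
    exact hu.mul_wInner_self_le_dirichletForm (fun x _ => hp x) hcard fun k _ => hmin k
  have hnorm : wInner S p h h = ∑ x, p x * h x ^ 2 := by
    rw [← wInner_univ_of_eq_zero hh0]
    exact Finset.sum_congr rfl fun x _ => by ring
  have hcs : (∑ x, p x * h x) ^ 2 ≤ ∑ x, p x * h x ^ 2 := by
    simpa [hp1] using Finset.sum_sq_le_sum_mul_sum_of_sq_le_mul univ
      (r := fun x => p x * h x) (f := p) (g := fun x => p x * h x ^ 2)
      (fun x _ => (hp x).le) (fun x _ => by have := (hp x).le; positivity)
      (fun x _ => le_of_eq (by ring))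
  have hpos : 0 < wInner S p h h := by
    obtain ⟨x, hx⟩ : S.Nonempty := Finset.card_pos.mp (hcard ▸ i.pos)
    obtain ⟨y, hy, hhy⟩ : ∃ y ∈ S, h y ≠ 0 := by
      by_contra! hzero
      have := hh x hx
      rw [Finset.sum_eq_zero fun y hy => by rw [hzero y hy, mul_zero], neg_zero] at this
      exact zero_ne_one this
    exact Finset.sum_pos' (fun x _ => mul_nonneg (mul_self_nonneg _) (hp x).le)
      ⟨y, hy, mul_pos (mul_self_pos.mpr hhy) (hp y)⟩
  rcases le_or_gt (lam i) 0 with hle | hgt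
  · exact hle.trans (one_div_nonneg.mpr hE)
  · have hEpos : 0 < ∑ x, p x * h x := lt_of_lt_of_le (mul_pos hgt hpos) hrayleigh
    rw [le_div_iff₀ hEpos]
    nlinarith

end Killed

end FiniteSpectral

open FiniteSpectral

/-- Let `L` be the generator of a reversible irreducible continuous-time Markov chain on a
finite state space `V` with stationary distribution `π`, with eigenvalues
`0 = λ₁ < λ₂ ≤ …` of `−L` (with eigenvectors orthonormal in `L²(π)`). For a nonempty
proper `B ⊆ V`, let `λ^B_1 ≤ λ^B_2 ≤ …` be the eigenvalues of `−L^B`, the generator of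
the chain killed on hitting `B` (acting on `L²(V∖B, π)`). Let `h x = E_x[H_B]` be the
expected hitting time of `B`, characterised by `h = 0` on `B` and `L h = −1` off `B`,
so that `E_π[H_B] = ∑ x, π x * h x`. Then `λ^B_2 − λ^B_1 ≥ λ₂ − 1/E_π[H_B]`. -/
theorem stmt_6 {V : Type*} [Fintype V] [DecidableEq V]
    (L : Matrix V V ℝ) (π : V → ℝ)
    (hπpos : ∀ x, 0 < π x) (hπsum : ∑ x, π x = 1)
    (B : Finset V)
    (m : ℕ) (hm : m = Fintype.card V) (h1m : 1 < m)
    (lam : Fin m → ℝ) (v : Fin m → V → ℝ)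
    (hmono : Monotone lam)
    (heig : ∀ k x, -∑ y, L x y * v k y = lam k * v k x)
    (horth : ∀ j k, (∑ x, v j x * v k x * π x) = if j = k then (1 : ℝ) else 0)
    (hlam1 : lam ⟨0, by omega⟩ = 0)
    (mB : ℕ) (hmB : mB = Fintype.card V - B.card) (h1mB : 1 < mB)
    (lamB : Fin mB → ℝ) (vB : Fin mB → V → ℝ)
    (hmonoB : Monotone lamB)
    (hvB0 : ∀ k, ∀ x ∈ B, vB k x = 0)
    (heigB : ∀ k, ∀ x ∉ B, -∑ y ∈ Finset.univ \ B, L x y * vB k y = lamB k * vB k x)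
    (horthB : ∀ j k, (∑ x ∈ Finset.univ \ B, vB j x * vB k x * π x)
      = if j = k then (1 : ℝ) else 0)
    (h : V → ℝ) (hh0 : ∀ x ∈ B, h x = 0)
    (hhEq : ∀ x ∉ B, ∑ y, L x y * h y = -1) :
    lamB ⟨1, h1mB⟩ - lamB ⟨0, by omega⟩ ≥ lam ⟨1, h1m⟩ - 1 / (∑ x, π x * h x) := by
  have hcard : (univ \ B).card = mB := by rw [card_univ_sdiff, hmB]
  have hv : IsEigensystem univ π L lam v := ⟨horth, fun k x _ => heig k x⟩
  have hvB : IsEigensystem (univ \ B) π L lamB vB :=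
    ⟨horthB, fun k x hx => heigB k x (Finset.mem_sdiff.mp hx).2⟩
  have hvB_supp : ∀ k, ∀ x ∉ univ \ B, vB k x = 0 := fun k x hx => hvB0 k x (by simpa using hx)
  have hh_supp : ∀ x ∉ univ \ B, h x = 0 := fun x hx => hh0 x (by simpa using hx)
  have hh : ∀ x ∈ univ \ B, -∑ y ∈ univ \ B, L x y * h y = 1 := fun x hx => by
    rw [sum_mul_eq_of_eq_zero hh_supp, hhEq x (Finset.mem_sdiff.mp hx).2, neg_neg]
  have hE : 0 ≤ ∑ x, π x * h x := by
    rw [← dirichletForm_eq_sum_of_hitting hh_supp hh, ← dirichletForm_univ_of_eq_zero hh_supp]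
    exact hv.dirichletForm_nonneg (fun x _ => hπpos x) (by rw [card_univ, hm])
      (fun k => hlam1 ▸ hmono (Fin.le_def.mpr k.val.zero_le)) h
  have hkilled : lamB ⟨0, by omega⟩ ≤ 1 / ∑ x, π x * h x :=
    hvB.le_one_div_sum_of_hitting hπpos hπsum hcard
      (fun k => hmonoB (Fin.le_def.mpr k.val.zero_le)) hh_supp hh hE
  have hinterlace : lam ⟨1, h1m⟩ ≤ max (lamB ⟨0, by omega⟩) (lamB ⟨1, h1mB⟩) :=
    hv.le_max_of_supported hπpos hm.symm (k₀ := ⟨0, by omega⟩)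
      (fun k hk => hmono (Fin.le_def.mpr (Nat.one_le_iff_ne_zero.mpr (Fin.val_ne_of_ne hk))))
      hvB hvB_supp (by simp)
  rw [max_eq_right (hmonoB (Fin.le_def.mpr (Nat.zero_le _)))] at hinterlace
  linarith
end

section
/- Removing one vertex v of degree d from a finite connected graph, while keeping it connected, increases the diameter by at most a factor of 3^{d-1}: if G is connected, v ∈ V(G) has degree d ≥ 1, and G − v is connected, then diam(G − v) ≤ 3^{d-1}·diam(G). -/
open SimpleGraph

/-- Lift a walk in `G` avoiding `v` to a walk in the induced subgraph on `{v}ᶜ`. -/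
lemma aux_lift_walk {V : Type*} (G : SimpleGraph V) (v : V) :
    ∀ {x y : V} (w : G.Walk x y), v ∉ w.support →
      ∀ (hx : x ∈ ({v}ᶜ : Set V)) (hy : y ∈ ({v}ᶜ : Set V)),
      ∃ w' : (G.induce ({v}ᶜ : Set V)).Walk ⟨x, hx⟩ ⟨y, hy⟩, w'.length = w.length := by
  intro x y w
  induction w with
  | nil => intro _ hx hy; exact ⟨SimpleGraph.Walk.nil, rfl⟩
  | @cons x z y h t ih =>
    intro hv hx hy
    rw [SimpleGraph.Walk.support_cons, List.mem_cons] at hv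
    push_neg at hv
    have hz : z ∈ ({v}ᶜ : Set V) := by
      simp only [Set.mem_compl_singleton_iff]
      intro hzv
      exact hv.2 (hzv ▸ t.start_mem_support)
    obtain ⟨t', ht'⟩ := ih hv.2 hz hy
    exact ⟨SimpleGraph.Walk.cons (by simpa using h) t', by simp [ht']⟩

/-- Distances along a walk grow at most linearly in the index difference. -/
lemma aux_dist_getVert_le {W : Type*} {H : SimpleGraph W} (hc : H.Connected)
    {a b : W} (q : H.Walk a b) :
    ∀ i j : ℕ, i ≤ j → H.dist (q.getVert i) (q.getVert j) ≤ j - i := by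
  induction q with
  | nil =>
    rename_i u
    intro i j _
    have h1 : (SimpleGraph.Walk.nil : H.Walk u u).getVert i = u :=
      SimpleGraph.Walk.getVert_of_length_le _ (by simp)
    have h2 : (SimpleGraph.Walk.nil : H.Walk u u).getVert j = u :=
      SimpleGraph.Walk.getVert_of_length_le _ (by simp)
    rw [h1, h2]
    simp [SimpleGraph.dist_self]
  | @cons a c b h t ih =>
    intro i j hij
    match i, j with
    | 0, 0 => simp
    | 0, (j+1) =>
      have h1 : (SimpleGraph.Walk.cons h t).getVert 0 = a := SimpleGraph.Walk.getVert_zero _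
      have h2 : (SimpleGraph.Walk.cons h t).getVert (j+1) = t.getVert j :=
        SimpleGraph.Walk.getVert_cons_succ _ _
      rw [h1, h2]
      have tri := hc.dist_triangle (u := a) (v := c) (w := t.getVert j)
      have hac : H.dist a c ≤ 1 := by
        have := SimpleGraph.dist_le (SimpleGraph.Walk.cons h SimpleGraph.Walk.nil)
        simpa using this
      have h3 : H.dist c (t.getVert j) ≤ j - 0 := by
        have := ih 0 j (Nat.zero_le _)
        rwa [SimpleGraph.Walk.getVert_zero] at this
      omega
    | (i+1), (j+1) =>
      have h1 : (SimpleGraph.Walk.cons h t).getVert (i+1) = t.getVert i :=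
        SimpleGraph.Walk.getVert_cons_succ _ _
      have h2 : (SimpleGraph.Walk.cons h t).getVert (j+1) = t.getVert j :=
        SimpleGraph.Walk.getVert_cons_succ _ _
      rw [h1, h2]
      have := ih i j (by omega)
      omega

lemma aux_pow_bound : ∀ e : ℕ, 2 * e + 1 ≤ 3 ^ e := by
  intro e
  induction e with
  | zero => simp
  | succ e ih =>
    have h1 : 1 ≤ 3 ^ e := Nat.one_le_pow _ _ (by norm_num)
    rw [pow_succ]
    omega

/-- Removing one vertex `v` of degree `d ≥ 1` from a finite connected graph, while keeping
it connected, increases the diameter by at most a factor of `3^(d-1)`. -/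
theorem stmt_12 {V : Type*} [Fintype V] [DecidableEq V] (G : SimpleGraph V)
    [DecidableRel G.Adj] (hG : G.Connected)
    (v : V) (d : ℕ) (hd : G.degree v = d) (hd1 : 1 ≤ d)
    (h' : (G.induce ({v}ᶜ : Set V)).Connected) :
    (G.induce ({v}ᶜ : Set V)).diam ≤ 3 ^ (d - 1) * G.diam := by
  set H := G.induce ({v}ᶜ : Set V) with hH
  set D := G.diam with hD
  have hGne : Nonempty V := ⟨v⟩
  have hGediam : G.ediam ≠ ⊤ := by
    obtain ⟨u1, u2, h12⟩ := SimpleGraph.exists_edist_eq_ediam_of_finite (G := G)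
    rw [← h12]
    exact SimpleGraph.edist_ne_top_iff_reachable.mpr (hG.preconnected u1 u2)
  obtain ⟨a0, ha0⟩ := (SimpleGraph.degree_pos_iff_exists_adj G v).mp (by omega : 0 < G.degree v)
  have hD1 : 1 ≤ D := by
    have h1 : G.dist v a0 = 1 := SimpleGraph.dist_eq_one_iff_adj.mpr ha0
    have := SimpleGraph.dist_le_diam hGediam (u := v) (v := a0)
    omega
  -- every vertex of H is within D - 1 of (the image of) a neighbor of v
  have nbr_ball : ∀ u : ({v}ᶜ : Set V), ∃ c, ∃ hc : c ∈ ({v}ᶜ : Set V),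
      G.Adj v c ∧ H.dist ⟨c, hc⟩ u ≤ D - 1 := by
    intro u
    obtain ⟨p, hp, hplen⟩ := hG.exists_path_of_dist v ↑u
    have huv : v ≠ (↑u : V) := fun h => (Set.mem_compl_singleton_iff.mp u.2) h.symm
    obtain ⟨c, hvc, t, rfl⟩ := SimpleGraph.Walk.exists_eq_cons_of_ne huv p
    rw [SimpleGraph.Walk.cons_isPath_iff] at hp
    have hc : c ∈ ({v}ᶜ : Set V) := Set.mem_compl_singleton_iff.mpr hvc.ne'
    obtain ⟨t', ht'⟩ := aux_lift_walk G v t hp.2 hc u.2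
    refine ⟨c, hc, hvc, ?_⟩
    have h1 : H.dist ⟨c, hc⟩ u ≤ t'.length := SimpleGraph.dist_le t'
    have h2 : (SimpleGraph.Walk.cons hvc t).length ≤ D := by
      rw [hplen]; exact SimpleGraph.dist_le_diam hGediam
    rw [SimpleGraph.Walk.length_cons] at h2
    omega
  -- key claim: neighbors of v are close in H
  have key : ∀ (a b : V) (ha' : a ∈ ({v}ᶜ : Set V)) (hb' : b ∈ ({v}ᶜ : Set V)),
      G.Adj v a → G.Adj v b →
      H.dist ⟨a, ha'⟩ ⟨b, hb'⟩ ≤ (d - 1) * (2 * D - 1) := by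
    intro a b ha' hb' ha hb
    by_cases hab : a = b
    · subst hab
      simp [SimpleGraph.dist_self]
    · have haN : a ∈ G.neighborFinset v := (SimpleGraph.mem_neighborFinset _ _ _).mpr ha
      have hbN : b ∈ G.neighborFinset v := (SimpleGraph.mem_neighborFinset _ _ _).mpr hb
      have hd2 : 2 ≤ d := by
        have := Finset.one_lt_card.mpr ⟨a, haN, b, hbN, hab⟩
        rwa [SimpleGraph.card_neighborFinset_eq_degree, hd] at this
      by_contra hcon
      push_neg at hcon
      obtain ⟨q, hq⟩ := h'.exists_walk_length_eq_dist ⟨a, ha'⟩ ⟨b, hb'⟩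
      obtain ⟨ℓ, hℓ⟩ : ∃ L, H.dist ⟨a, ha'⟩ ⟨b, hb'⟩ = L := ⟨_, rfl⟩
      rw [hℓ] at hcon hq
      have hq0 : q.getVert 0 = ⟨a, ha'⟩ := q.getVert_zero
      have hqL : q.getVert ℓ = ⟨b, hb'⟩ := by rw [← hq]; exact q.getVert_length
      have L2 := aux_dist_getVert_le h' q
      have hmul1 : (d - 1) * (2 * D - 1) = (d - 2) * (2 * D - 1) + (2 * D - 1) := by
        have hde : d - 1 = (d - 2) + 1 := by omega
        rw [hde, add_mul, one_mul]
      have hidx : ∀ t, t < d - 1 → (D + t * (2 * D - 1)) + D ≤ ℓ := by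
        intro t ht
        have h1 : t * (2 * D - 1) ≤ (d - 2) * (2 * D - 1) :=
          Nat.mul_le_mul_right _ (by omega)
        omega
      choose g hgmem hgadj hgdist using
        (fun t => nbr_ball (q.getVert (D + t * (2 * D - 1))))
      have distA : ∀ i, H.dist ⟨a, ha'⟩ (q.getVert i) ≤ i := by
        intro i
        have := L2 0 i (Nat.zero_le _)
        rw [hq0] at this
        simpa using this
      have distB : ∀ i, i ≤ ℓ → H.dist (q.getVert i) ⟨b, hb'⟩ ≤ ℓ - i := by
        intro i hi
        have := L2 i ℓ hi
        rwa [hqL] at this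
      have hmaps : ∀ t ∈ Finset.range (d - 1),
          g t ∈ ((G.neighborFinset v).erase a).erase b := by
        intro t ht
        rw [Finset.mem_range] at ht
        have hidxt := hidx t ht
        rw [Finset.mem_erase, Finset.mem_erase]
        refine ⟨fun hgb => ?_, fun hga => ?_,
          (SimpleGraph.mem_neighborFinset _ _ _).mpr (hgadj t)⟩
        · -- g t = b is impossible
          have h2 : H.dist (q.getVert (D + t * (2 * D - 1))) ⟨b, hb'⟩ ≤ D - 1 := by
            have h3 := hgdist t
            have e : (⟨g t, hgmem t⟩ : ({v}ᶜ : Set V)) = ⟨b, hb'⟩ := Subtype.ext hgb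
            rw [e] at h3
            rwa [H.dist_comm]
          have t1 := h'.dist_triangle (u := (⟨a, ha'⟩ : ({v}ᶜ : Set V)))
            (v := q.getVert (D + t * (2 * D - 1))) (w := ⟨b, hb'⟩)
          rw [hℓ] at t1
          have h1 := distA (D + t * (2 * D - 1))
          omega
        · -- g t = a is impossible
          have h1 : H.dist ⟨a, ha'⟩ (q.getVert (D + t * (2 * D - 1))) ≤ D - 1 := by
            have h3 := hgdist t
            have e : (⟨g t, hgmem t⟩ : ({v}ᶜ : Set V)) = ⟨a, ha'⟩ := Subtype.ext hga
            rwa [e] at h3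
          have h2 := distB (D + t * (2 * D - 1)) (by omega)
          have t1 := h'.dist_triangle (u := (⟨a, ha'⟩ : ({v}ᶜ : Set V)))
            (v := q.getVert (D + t * (2 * D - 1))) (w := ⟨b, hb'⟩)
          rw [hℓ] at t1
          omega
      have hcard : (((G.neighborFinset v).erase a).erase b).card
          < (Finset.range (d - 1)).card := by
        rw [Finset.card_range,
          Finset.card_erase_of_mem (Finset.mem_erase.mpr ⟨fun h => hab h.symm, hbN⟩),
          Finset.card_erase_of_mem haN, SimpleGraph.card_neighborFinset_eq_degree, hd]
        omega
      obtain ⟨s1, hs1, s2, hs2, hsne, hseq⟩ :=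
        Finset.exists_ne_map_eq_of_card_lt_of_maps_to hcard hmaps
      -- wlog s1 < s2
      obtain ⟨r1, r2, hr12, hr1, hr2, hreq⟩ :
          ∃ r1 r2, r1 < r2 ∧ r1 ∈ Finset.range (d - 1) ∧ r2 ∈ Finset.range (d - 1)
            ∧ g r1 = g r2 := by
        rcases lt_or_gt_of_ne hsne with h | h
        · exact ⟨s1, s2, h, hs1, hs2, hseq⟩
        · exact ⟨s2, s1, h, hs2, hs1, hseq.symm⟩
      rw [Finset.mem_range] at hr1 hr2
      have hgap : (D + r1 * (2 * D - 1)) + (2 * D - 1) ≤ D + r2 * (2 * D - 1) := by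
        have hstep : (r1 + 1) * (2 * D - 1) ≤ r2 * (2 * D - 1) :=
          Nat.mul_le_mul_right _ (by omega)
        rw [add_mul, one_mul] at hstep
        omega
      have hi2ℓ : D + r2 * (2 * D - 1) ≤ ℓ := by
        have := hidx r2 hr2
        omega
      -- lower bound on middle distance
      have t1 := h'.dist_triangle (u := (⟨a, ha'⟩ : ({v}ᶜ : Set V)))
        (v := q.getVert (D + r1 * (2 * D - 1))) (w := ⟨b, hb'⟩)
      rw [hℓ] at t1
      have t2 := h'.dist_triangle (u := q.getVert (D + r1 * (2 * D - 1)))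
        (v := q.getVert (D + r2 * (2 * D - 1))) (w := ⟨b, hb'⟩)
      have hA := distA (D + r1 * (2 * D - 1))
      have hB := distB (D + r2 * (2 * D - 1)) hi2ℓ
      -- upper bound on middle distance
      have t3 := h'.dist_triangle (u := q.getVert (D + r1 * (2 * D - 1)))
        (v := (⟨g r1, hgmem r1⟩ : ({v}ᶜ : Set V)))
        (w := q.getVert (D + r2 * (2 * D - 1)))
      have u1 : H.dist (q.getVert (D + r1 * (2 * D - 1))) ⟨g r1, hgmem r1⟩ ≤ D - 1 := by
        rw [H.dist_comm]; exact hgdist r1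
      have u2 : H.dist (⟨g r1, hgmem r1⟩ : ({v}ᶜ : Set V))
          (q.getVert (D + r2 * (2 * D - 1))) ≤ D - 1 := by
        have e : (⟨g r1, hgmem r1⟩ : ({v}ᶜ : Set V)) = ⟨g r2, hgmem r2⟩ := Subtype.ext hreq
        rw [e]; exact hgdist r2
      omega
  -- main bound
  have main : ∀ x y : ({v}ᶜ : Set V), H.dist x y ≤ 3 ^ (d - 1) * D := by
    intro x y
    have hpow : 2 * (d - 1) + 1 ≤ 3 ^ (d - 1) := aux_pow_bound (d - 1)
    obtain ⟨p, hp, hplen⟩ := hG.exists_path_of_dist ↑x ↑y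
    have hpD : p.length ≤ D := by rw [hplen]; exact SimpleGraph.dist_le_diam hGediam
    by_cases hv : v ∈ p.support
    · have hq1 : (p.takeUntil v hv).IsPath := hp.takeUntil hv
      have hq2 : (p.dropUntil v hv).IsPath := hp.dropUntil hv
      have hlen12 : (p.takeUntil v hv).length + (p.dropUntil v hv).length = p.length := by
        rw [← SimpleGraph.Walk.length_append, SimpleGraph.Walk.take_spec]
      have hvy : v ≠ (↑y : V) := fun h => Set.mem_compl_singleton_iff.mp y.2 h.symm
      obtain ⟨b, hvb, t2, ht2eq⟩ :=
        SimpleGraph.Walk.exists_eq_cons_of_ne hvy (p.dropUntil v hv)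
      rw [ht2eq, SimpleGraph.Walk.cons_isPath_iff] at hq2
      have hvx : v ≠ (↑x : V) := fun h => Set.mem_compl_singleton_iff.mp x.2 h.symm
      obtain ⟨a, hva, t1, ht1eq⟩ :=
        SimpleGraph.Walk.exists_eq_cons_of_ne hvx (p.takeUntil v hv).reverse
      have hq1r : (p.takeUntil v hv).reverse.IsPath := hq1.reverse
      rw [ht1eq, SimpleGraph.Walk.cons_isPath_iff] at hq1r
      have ha' : a ∈ ({v}ᶜ : Set V) := Set.mem_compl_singleton_iff.mpr hva.ne'
      have hb' : b ∈ ({v}ᶜ : Set V) := Set.mem_compl_singleton_iff.mpr hvb.ne'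
      have hvt1 : v ∉ t1.reverse.support := by
        rw [SimpleGraph.Walk.support_reverse]
        simpa using hq1r.2
      obtain ⟨w1, hw1⟩ := aux_lift_walk G v t1.reverse hvt1 x.2 ha'
      obtain ⟨w2, hw2⟩ := aux_lift_walk G v t2 hq2.2 hb' y.2
      have d1 : H.dist x ⟨a, ha'⟩ ≤ t1.length := by
        have h := SimpleGraph.dist_le w1
        rw [hw1, SimpleGraph.Walk.length_reverse] at h
        exact h
      have d2 : H.dist ⟨b, hb'⟩ y ≤ t2.length := by
        have h := SimpleGraph.dist_le w2
        rw [hw2] at h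
        exact h
      have dk := key a b ha' hb' hva hvb
      have tri1 := h'.dist_triangle (u := x) (v := (⟨a, ha'⟩ : ({v}ᶜ : Set V))) (w := y)
      have tri2 := h'.dist_triangle (u := (⟨a, ha'⟩ : ({v}ᶜ : Set V)))
        (v := (⟨b, hb'⟩ : ({v}ᶜ : Set V))) (w := y)
      have hl1 : t1.length + 1 = (p.takeUntil v hv).length := by
        have h := congrArg SimpleGraph.Walk.length ht1eq
        rw [SimpleGraph.Walk.length_reverse, SimpleGraph.Walk.length_cons] at h
        omega
      have hl2 : t2.length + 1 = (p.dropUntil v hv).length := by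
        have h := congrArg SimpleGraph.Walk.length ht2eq
        rw [SimpleGraph.Walk.length_cons] at h
        omega
      have hmulD : (d - 1) * (2 * D - 1) ≤ (d - 1) * (2 * D) :=
        Nat.mul_le_mul_left _ (by omega)
      have hring : (2 * (d - 1) + 1) * D = (d - 1) * (2 * D) + D := by ring
      have hfin : (2 * (d - 1) + 1) * D ≤ 3 ^ (d - 1) * D :=
        Nat.mul_le_mul_right _ hpow
      omega
    · obtain ⟨w, hw⟩ := aux_lift_walk G v p hv x.2 y.2
      have h1 : H.dist x y ≤ w.length := SimpleGraph.dist_le w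
      have hfin : 1 * D ≤ 3 ^ (d - 1) * D := Nat.mul_le_mul_right _ (by omega)
      omega
  haveI hne2 : Nonempty ({v}ᶜ : Set V) := h'.nonempty
  obtain ⟨x, y, hxy⟩ := SimpleGraph.exists_dist_eq_diam (G := H)
  rw [← hxy]
  exact main x y
end
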